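/- arXiv:1309.1794 — 3 statements merged into one kernel-verified Lean document; each statement's English description precedes it below -/
import Mathlib

section
/- Let G be an undirected connected graph on nodes 1,…,N, let f : ℝⁿ → ℝⁿ be continuously differentiable, B ∈ ℝ^{n×p}, C ∈ ℝ^{p×n}, and suppose the Assumption (OFP) holds. Let xᵢ : [0,∞) → ℝⁿ (i = 1,…,N) and kᵢⱼ : [0,∞) → ℝ be continuously differentiable functions solving the adaptively coupled system. If all xᵢ(t) and kᵢⱼ(t) are bounded on [0,∞) and xᵢ(t) ∈ X for all t ≥ 0 and all i, then ỹᵢ(t) → 0 as t → ∞ for every i = 1,…,N; i.e., the outputs of the N systems synchronize. -/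
/-!
Along solutions, `V = ∑ᵢ ẽᵢ ⬝ P ẽᵢ + ∑_{i ~ j} (kᵢⱼ - κ)² / (2 γᵢⱼ)`, with `ẽᵢ = xᵢ - x̄`, is a
Lyapunov function. Integrating the OFP matrix inequality along the segment `[x̄, xᵢ]` bounds the
drift part of `V̇` by `θ ∑ |ỹᵢ|²`; `P B = Cᵀ` turns the coupling part into `-∑ kᵢⱼ |ỹᵢ - ỹⱼ|²`,
and the adaptation law replaces the gains `kᵢⱼ` there by the constant `κ`. As `G` is connected,
the Dirichlet energy `∑_{i ~ j} |ỹᵢ - ỹⱼ|²` dominates `λ ∑ |ỹᵢ|²` for mean-zero `ỹ`, so with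
`κ λ = θ + 1` we get `V̇ ≤ -∑ |ỹᵢ|²`. Bounded states and gains make `ỹ` uniformly continuous,
and Barbalat's lemma gives `ỹ → 0`.
-/

open Matrix Filter Topology Set

section DotProduct

variable {m q : Type*} [Fintype m] [Fintype q]

theorem dotProduct_self_nonneg {R : Type*} [Ring R] [LinearOrder R] [IsStrictOrderedRing R]
    (v : m → R) : 0 ≤ v ⬝ᵥ v :=
  Fintype.sum_nonneg fun i => mul_self_nonneg (v i)

theorem norm_sq_le_dotProduct_self (v : m → ℝ) : ‖v‖ ^ 2 ≤ v ⬝ᵥ v := by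
  rw [← Real.sqrt_le_sqrt_iff (dotProduct_self_nonneg v), Real.sqrt_sq (norm_nonneg v)]
  refine (pi_norm_le_iff_of_nonneg (Real.sqrt_nonneg _)).2 fun a => ?_
  rw [Real.norm_eq_abs, ← Real.sqrt_sq_eq_abs]
  exact Real.sqrt_le_sqrt (sq (v a) ▸ Finset.single_le_sum (f := fun b => v b * v b)
    (fun b _ => mul_self_nonneg _) (Finset.mem_univ a))

theorem norm_sq_le_sum_dotProduct_self {ι : Type*} [Fintype ι] (y : ι → m → ℝ) (i : ι) :
    ‖y i‖ ^ 2 ≤ ∑ j, y j ⬝ᵥ y j :=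
  (norm_sq_le_dotProduct_self (y i)).trans
    (Finset.single_le_sum (fun j _ => dotProduct_self_nonneg (y j)) (Finset.mem_univ i))

theorem HasDerivAt.dotProduct {u v : ℝ → m → ℝ} {u' v' : m → ℝ} {t : ℝ}
    (hu : HasDerivAt u u' t) (hv : HasDerivAt v v' t) :
    HasDerivAt (fun s => u s ⬝ᵥ v s) (u' ⬝ᵥ v t + u t ⬝ᵥ v') t := by
  simp only [_root_.dotProduct, ← Finset.sum_add_distrib]
  exact HasDerivAt.fun_sum fun a _ => (hasDerivAt_pi.1 hu a).mul (hasDerivAt_pi.1 hv a)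

theorem HasDerivAt.matrix_mulVec (A : Matrix q m ℝ) {u : ℝ → m → ℝ} {u' : m → ℝ} {t : ℝ}
    (hu : HasDerivAt u u' t) : HasDerivAt (fun s => A *ᵥ u s) (A *ᵥ u') t :=
  A.mulVecLin.toContinuousLinearMap.hasFDerivAt.comp_hasDerivAt t hu

theorem Matrix.IsSymm.dotProduct_mulVec_comm {P : Matrix m m ℝ} (hP : P.IsSymm) (v w : m → ℝ) :
    v ⬝ᵥ (P *ᵥ w) = w ⬝ᵥ (P *ᵥ v) := by
  rw [dotProduct_mulVec, ← mulVec_transpose, hP.eq, dotProduct_comm]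

theorem HasDerivAt.dotProduct_mulVec_self {P : Matrix m m ℝ} (hP : P.IsSymm) {u : ℝ → m → ℝ}
    {u' : m → ℝ} {t : ℝ} (hu : HasDerivAt u u' t) :
    HasDerivAt (fun s => u s ⬝ᵥ (P *ᵥ u s)) (2 * (u t ⬝ᵥ (P *ᵥ u'))) t := by
  convert hu.dotProduct (hu.matrix_mulVec P) using 1
  rw [hP.dotProduct_mulVec_comm u']
  ring

theorem Matrix.IsSymm.dotProduct_mul_add_transpose_mul_mulVec {P A : Matrix m m ℝ}
    (hP : P.IsSymm) (v : m → ℝ) :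
    v ⬝ᵥ ((P * A + Aᵀ * P) *ᵥ v) = 2 * (v ⬝ᵥ (P *ᵥ (A *ᵥ v))) := by
  rw [add_mulVec, dotProduct_add, ← mulVec_mulVec, ← mulVec_mulVec, dotProduct_mulVec v Aᵀ,
    vecMul_transpose, hP.dotProduct_mulVec_comm (A *ᵥ v)]
  ring

/-- The OFP matrix inequality, integrated along the segment `[a, b]` by the mean value theorem. -/
theorem two_mul_dotProduct_mulVec_sub_le {f : (m → ℝ) → m → ℝ} {J : (m → ℝ) → Matrix m m ℝ}
    {X : Set (m → ℝ)} (hX : Convex ℝ X)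
    (hf : ∀ z ∈ X, HasFDerivAt f (J z).mulVecLin.toContinuousLinearMap z)
    {P : Matrix m m ℝ} (hP : P.IsSymm) {C : Matrix q m ℝ} {θ : ℝ}
    (hLMI : ∀ z ∈ X, ∀ v, v ⬝ᵥ ((P * J z + (J z)ᵀ * P) *ᵥ v) ≤ θ * ((C *ᵥ v) ⬝ᵥ (C *ᵥ v)))
    {a b : m → ℝ} (ha : a ∈ X) (hb : b ∈ X) :
    2 * ((b - a) ⬝ᵥ (P *ᵥ (f b - f a))) ≤ θ * ((C *ᵥ (b - a)) ⬝ᵥ (C *ᵥ (b - a))) := by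
  obtain ⟨v, rfl⟩ : ∃ v, b = a + v := ⟨b - a, (add_sub_cancel a b).symm⟩
  rw [add_sub_cancel_left]
  have hseg : ∀ s ∈ Icc (0 : ℝ) 1, a + s • v ∈ X := fun s hs => by
    convert hX ha hb (sub_nonneg.2 hs.2) hs.1 (sub_add_cancel 1 s) using 1
    module
  have hφ : ∀ s ∈ Icc (0 : ℝ) 1, HasDerivAt (fun s => v ⬝ᵥ (P *ᵥ f (a + s • v)))
      (v ⬝ᵥ (P *ᵥ (J (a + s • v) *ᵥ v))) s := fun s hs =>
    (hasDerivAt_const s v).dotProduct (((hf _ (hseg s hs)).comp_hasDerivAt s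
      (((hasDerivAt_id s).smul_const v).const_add a)).matrix_mulVec P) |>.congr_deriv (by simp)
  obtain ⟨c, hc, hslope⟩ := exists_hasDerivAt_eq_slope _ _ zero_lt_one
    (fun s hs => (hφ s hs).continuousAt.continuousWithinAt)
    (fun s hs => hφ s (Ioo_subset_Icc_self hs))
  have hends : v ⬝ᵥ (P *ᵥ (f (a + v) - f a)) = v ⬝ᵥ (P *ᵥ (J (a + c • v) *ᵥ v)) := by
    rw [hslope, one_smul, zero_smul, add_zero, sub_zero, div_one, mulVec_sub, dotProduct_sub]
  rw [hends, ← hP.dotProduct_mul_add_transpose_mul_mulVec]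
  exact hLMI _ (hseg c (Ioo_subset_Icc_self hc)) v

theorem two_mul_sum_dotProduct_sum_smul_sub {R ι : Type*} [CommRing R] [Fintype ι]
    {k : ι → ι → R} (hk : ∀ i j, k i j = k j i) (y : ι → m → R) :
    2 * ∑ i, y i ⬝ᵥ ∑ j, k i j • (y j - y i) = -∑ i, ∑ j, k i j * ((y i - y j) ⬝ᵥ (y i - y j)) := by
  have hswap : ∑ i, ∑ j, k i j * (y j ⬝ᵥ y j) = ∑ i, ∑ j, k i j * (y i ⬝ᵥ y i) := by
    rw [Finset.sum_comm]
    simp_rw [hk]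
  have hcomm : ∑ i, ∑ j, k i j * (y j ⬝ᵥ y i) = ∑ i, ∑ j, k i j * (y i ⬝ᵥ y j) := by
    simp_rw [dotProduct_comm]
  simp only [dotProduct_sum, dotProduct_smul, sub_dotProduct, dotProduct_sub, smul_eq_mul,
    mul_sub, Finset.sum_sub_distrib] at hswap hcomm ⊢
  linear_combination hswap - hcomm

end DotProduct

theorem exists_pos_mul_le_of_sq_homogeneous {E : Type*} [NormedAddCommGroup E]
    [NormedSpace ℝ E] [ProperSpace E] {S : Set E} (hS : IsClosed S)
    (hS_smul : ∀ (c : ℝ), ∀ y ∈ S, c • y ∈ S) {Q R : E → ℝ} (hQ : Continuous Q)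
    (hR : Continuous R) (hQ_smul : ∀ (c : ℝ) y, Q (c • y) = c ^ 2 * Q y)
    (hR_smul : ∀ (c : ℝ) y, R (c • y) = c ^ 2 * R y) (hQ_pos : ∀ y ∈ S, y ≠ 0 → 0 < Q y) :
    ∃ lam > 0, ∀ y ∈ S, lam * R y ≤ Q y := by
  have hK : IsCompact (S ∩ Metric.sphere 0 1) := (isCompact_sphere 0 1).inter_left hS
  obtain ⟨m, hm, hQm⟩ := hK.exists_forall_le' hQ.continuousOn fun y hy =>
    hQ_pos y hy.1 (ne_zero_of_mem_unit_sphere ⟨y, hy.2⟩)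
  obtain ⟨M, hRM⟩ := hK.exists_bound_of_continuousOn hR.continuousOn
  refine ⟨m / (|M| + 1), by positivity, fun y hy => ?_⟩
  rcases eq_or_ne y 0 with rfl | hy0
  · have hR0 : R 0 = 0 := by simpa using hR_smul 0 0
    have hQ0 : Q 0 = 0 := by simpa using hQ_smul 0 0
    rw [hR0, hQ0, mul_zero]
  set u := ‖y‖⁻¹ • y
  have hu : u ∈ S ∩ Metric.sphere 0 1 :=
    ⟨hS_smul _ y hy, by simp [u, norm_smul, inv_mul_cancel₀ (norm_ne_zero_iff.2 hy0)]⟩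
  have hlam : m / (|M| + 1) * R u ≤ Q u :=
    calc m / (|M| + 1) * R u ≤ m / (|M| + 1) * (|M| + 1) := by
          gcongr
          exact (Real.le_norm_self _).trans ((hRM u hu).trans (by linarith [le_abs_self M]))
      _ = m := div_mul_cancel₀ m (by positivity)
      _ ≤ Q u := hQm u hu
  rw [← smul_inv_smul₀ (norm_ne_zero_iff.2 hy0) y, hQ_smul, hR_smul]
  linear_combination mul_le_mul_of_nonneg_left hlam (sq_nonneg ‖y‖)

namespace SimpleGraph

variable {V m : Type*} [Fintype V] [Fintype m] (G : SimpleGraph V) [DecidableRel G.Adj]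

def dirichletEnergy (y : V → m → ℝ) : ℝ :=
  ∑ i, ∑ j, if G.Adj i j then (y i - y j) ⬝ᵥ (y i - y j) else 0

variable {G}

theorem dirichletEnergy_nonneg (y : V → m → ℝ) : 0 ≤ G.dirichletEnergy y :=
  Finset.sum_nonneg fun i _ => Finset.sum_nonneg fun j _ => by
    split_ifs
    exacts [dotProduct_self_nonneg _, le_rfl]

theorem continuous_dirichletEnergy : Continuous (G.dirichletEnergy (m := m)) :=
  continuous_finsetSum _ fun i _ => continuous_finsetSum _ fun j _ => by
    split_ifs <;> fun_prop

theorem dirichletEnergy_eq_zero_iff {y : V → m → ℝ} :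
    G.dirichletEnergy y = 0 ↔ ∀ i j, G.Adj i j → y i = y j := by
  have hterm : ∀ i j, 0 ≤ if G.Adj i j then (y i - y j) ⬝ᵥ (y i - y j) else (0 : ℝ) :=
    fun i j => by split_ifs; exacts [dotProduct_self_nonneg _, le_rfl]
  rw [dirichletEnergy,
    Finset.sum_eq_zero_iff_of_nonneg fun i _ => Finset.sum_nonneg fun j _ => hterm i j]
  simp only [Finset.sum_eq_zero_iff_of_nonneg fun j _ => hterm _ j, Finset.mem_univ, true_imp_iff,
    ite_eq_right_iff, dotProduct_self_eq_zero, sub_eq_zero]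

theorem Connected.eq_of_dirichletEnergy_eq_zero (hG : G.Connected) {y : V → m → ℝ}
    (hy : G.dirichletEnergy y = 0) (i j : V) : y i = y j := by
  obtain ⟨w⟩ := hG i j
  induction w with
  | nil => rfl
  | cons hadj _ ih => exact (dirichletEnergy_eq_zero_iff.1 hy _ _ hadj).trans ih

theorem dirichletEnergy_smul (c : ℝ) (y : V → m → ℝ) :
    G.dirichletEnergy (c • y) = c ^ 2 * G.dirichletEnergy y := by
  simp only [dirichletEnergy, Finset.mul_sum, Pi.smul_apply, ← smul_sub, smul_dotProduct,
    dotProduct_smul, smul_eq_mul]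
  refine Finset.sum_congr rfl fun i _ => Finset.sum_congr rfl fun j _ => ?_
  split_ifs <;> ring

theorem Connected.dirichletEnergy_pos (hG : G.Connected) {y : V → m → ℝ} (hy : ∑ i, y i = 0)
    (hy₀ : y ≠ 0) : 0 < G.dirichletEnergy y := by
  refine (dirichletEnergy_nonneg y).lt_of_ne fun h => hy₀ ?_
  obtain ⟨i₀⟩ := hG.nonempty
  have hconst := hG.eq_of_dirichletEnergy_eq_zero h.symm
  have hsum : ∑ i, y i = (Fintype.card V : ℝ) • y i₀ := by
    simp [hconst _ i₀, Finset.card_univ, ← Nat.cast_smul_eq_nsmul ℝ]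
  rw [hsum, smul_eq_zero] at hy
  funext i
  rw [hconst i i₀, hy.resolve_left (Nat.cast_ne_zero.2 (Fintype.card_pos_iff.2 ⟨i₀⟩).ne')]
  rfl

theorem Connected.exists_pos_mul_sum_dotProduct_self_le_dirichletEnergy (hG : G.Connected) :
    ∃ lam > 0, ∀ y : V → m → ℝ, ∑ i, y i = 0 → lam * ∑ i, y i ⬝ᵥ y i ≤ G.dirichletEnergy y :=
  exists_pos_mul_le_of_sq_homogeneous (S := {y : V → m → ℝ | ∑ i, y i = 0})
    (R := fun y => ∑ i, y i ⬝ᵥ y i)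
    (isClosed_eq (by fun_prop) continuous_const) (fun c y hy => by simp_all [← Finset.smul_sum])
    continuous_dirichletEnergy (by fun_prop) dirichletEnergy_smul
    (fun c y => by
      simp only [Finset.mul_sum, Pi.smul_apply, smul_dotProduct, dotProduct_smul, smul_eq_mul]
      exact Finset.sum_congr rfl fun i _ => by ring)
    fun _ => hG.dirichletEnergy_pos

end SimpleGraph

/-- Barbalat's lemma in Lyapunov form. If `‖y t‖ ≥ ε`, uniform continuity keeps `‖y‖ > ε / 2` on
`[t, t + δ / 2]`, so `V` drops there by a fixed amount; this cannot happen for large `t` because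
the antitone, bounded below `V` converges. -/
theorem tendsto_zero_of_hasDerivAt_le_neg_norm_sq {E : Type*} [NormedAddCommGroup E]
    {V V' : ℝ → ℝ} {y : ℝ → E} {c : ℝ}
    (hV : ∀ t, 0 ≤ t → HasDerivAt V (V' t) t) (hV' : ∀ t, 0 ≤ t → V' t ≤ -‖y t‖ ^ 2)
    (hc : ∀ t, 0 ≤ t → c ≤ V t) (hy : UniformContinuousOn y (Ici 0)) :
    Tendsto y atTop (𝓝 0) := by
  have hanti : AntitoneOn V (Ici 0) :=
    antitoneOn_of_hasDerivWithinAt_nonpos (convex_Ici 0)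
      (fun t ht => (hV t ht).continuousAt.continuousWithinAt)
      (fun t ht => (hV t (interior_subset ht)).hasDerivWithinAt)
      (fun t ht => (hV' t (interior_subset ht)).trans (neg_nonpos.2 (sq_nonneg _)))
  obtain ⟨l, hl⟩ : ∃ l, Tendsto V atTop (𝓝 l) := by
    have hW : Antitone fun t => V (max t 0) := fun s t hst =>
      hanti (le_max_right s 0) (le_max_right t 0) (max_le_max_right 0 hst)
    refine ⟨_, (tendsto_atTop_ciInf hW ⟨c, ?_⟩).congr' ?_⟩
    · rintro _ ⟨t, rfl⟩
      exact hc _ (le_max_right _ _)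
    · filter_upwards [eventually_ge_atTop 0] with t ht
      rw [max_eq_left ht]
  rw [Metric.tendsto_nhds]
  intro ε hε
  obtain ⟨δ, hδ, hyδ⟩ := Metric.uniformContinuousOn_iff.1 hy (ε / 2) (half_pos hε)
  have hdrop : Tendsto (fun t => V (t + δ / 2) - V t) atTop (𝓝 0) := by
    simpa using (hl.comp (tendsto_atTop_add_const_right _ _ tendsto_id)).sub hl
  filter_upwards [eventually_ge_atTop 0,
    (Metric.tendsto_nhds.1 hdrop) ((ε / 2) ^ 2 * (δ / 2)) (by positivity)] with t ht hsmall
  rw [dist_zero_right]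
  by_contra! hyt
  obtain ⟨s, hs, hslope⟩ := exists_hasDerivAt_eq_slope V V' (by linarith : t < t + δ / 2)
    (fun u hu => (hV u (ht.trans hu.1)).continuousAt.continuousWithinAt)
    (fun u hu => hV u (ht.trans hu.1.le))
  have hys : ε / 2 < ‖y s‖ := by
    have := hyδ s (ht.trans hs.1.le) t ht
      (by rw [Real.dist_eq, abs_of_pos (by linarith [hs.1])]; linarith [hs.2])
    linarith [norm_sub_norm_le (y t) (y s), dist_eq_norm' (y s) (y t)]
  have hV's : V' s < -(ε / 2) ^ 2 :=
    (hV' s (ht.trans hs.1.le)).trans_lt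
      (neg_lt_neg (pow_lt_pow_left₀ hys (by positivity) two_ne_zero))
  rw [add_sub_cancel_left, eq_div_iff (by positivity)] at hslope
  rw [Real.dist_eq, sub_zero] at hsmall
  linarith [neg_abs_le (V (t + δ / 2) - V t), mul_lt_mul_of_pos_right hV's (half_pos hδ)]

theorem uniformContinuousOn_Ici_of_hasDerivAt_comp {E F : Type*} [NormedAddCommGroup E]
    [ProperSpace E] [NormedAddCommGroup F] [NormedSpace ℝ F] {y : ℝ → F} {u : ℝ → E}
    {Ψ : E → F} (hΨ : Continuous Ψ) {M : ℝ} (hu : ∀ t, 0 ≤ t → ‖u t‖ ≤ M)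
    (hy : ∀ t, 0 ≤ t → HasDerivAt y (Ψ (u t)) t) : UniformContinuousOn y (Ici 0) := by
  obtain ⟨D, hD⟩ := (isCompact_closedBall (0 : E) M).exists_bound_of_continuousOn hΨ.continuousOn
  refine ((convex_Ici 0).lipschitzOnWith_of_nnnorm_hasDerivWithin_le (C := D.toNNReal)
    (fun t ht => (hy t ht).hasDerivWithinAt) fun t ht => ?_).uniformContinuousOn
  rw [← NNReal.coe_le_coe, coe_nnnorm, Real.coe_toNNReal']
  exact (hD _ (mem_closedBall_zero_iff.2 (hu t ht))).trans (le_max_left _ _)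

noncomputable section

namespace AdaptiveNetwork

variable {N n p : ℕ}

section Average

variable {E : Type*} [AddCommGroup E] [Module ℝ E]

def average (x : Fin N → E) : E := (N : ℝ)⁻¹ • ∑ j, x j

def deviation (x : Fin N → E) (i : Fin N) : E := x i - average x

theorem sum_deviation (x : Fin N → E) : ∑ i, deviation x i = 0 := by
  rcases eq_or_ne N 0 with rfl | hN
  · simp
  simp only [deviation, average, Finset.sum_sub_distrib, Finset.sum_const, Finset.card_univ,
    Fintype.card_fin]
  rw [← Nat.cast_smul_eq_nsmul ℝ, smul_smul, mul_inv_cancel₀ (Nat.cast_ne_zero.2 hN), one_smul,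
    sub_self]

theorem average_mem [NeZero N] {X : Set E} (hX : Convex ℝ X) {x : Fin N → E}
    (hx : ∀ i, x i ∈ X) : average x ∈ X := by
  rw [average, Finset.smul_sum]
  exact hX.sum_mem (fun _ _ => by positivity) (by simp [NeZero.ne N]) fun i _ => hx i

theorem hasDerivAt_deviation {F : Type*} [NormedAddCommGroup F] [NormedSpace ℝ F]
    {x : Fin N → ℝ → F} {x' : Fin N → F} {t : ℝ} (hx : ∀ i, HasDerivAt (x i) (x' i) t)
    (i : Fin N) : HasDerivAt (fun s => deviation (x · s) i) (deviation x' i) t :=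
  (hx i).sub ((HasDerivAt.fun_sum fun j _ => hx j).const_smul _)

end Average

variable (f : (Fin n → ℝ) → Fin n → ℝ) (B : Matrix (Fin n) (Fin p) ℝ)
  (C : Matrix (Fin p) (Fin n) ℝ) (G : SimpleGraph (Fin N)) [DecidableRel G.Adj]
  (P : Matrix (Fin n) (Fin n) ℝ) (γ : Fin N → Fin N → ℝ) (κ : ℝ)

def networkField (k : Fin N → Fin N → ℝ) (x : Fin N → Fin n → ℝ) (i : Fin N) : Fin n → ℝ :=
  f (x i) + B *ᵥ ∑ j, k i j • (C *ᵥ x j - C *ᵥ x i)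

def adaptationRate (x : Fin N → Fin n → ℝ) (i j : Fin N) : ℝ :=
  γ i j * ((C *ᵥ x i - C *ᵥ x j) ⬝ᵥ (C *ᵥ x i - C *ᵥ x j))

def lyapunov (x : Fin N → Fin n → ℝ) (k : Fin N → Fin N → ℝ) : ℝ :=
  ∑ i, deviation x i ⬝ᵥ (P *ᵥ deviation x i) +
    ∑ i, ∑ j, if G.Adj i j then (k i j - κ) ^ 2 / (2 * γ i j) else 0

def lyapunovDeriv (x x' : Fin N → Fin n → ℝ) (k k' : Fin N → Fin N → ℝ) : ℝ :=
  2 * ∑ i, deviation x i ⬝ᵥ (P *ᵥ deviation x' i) +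
    ∑ i, ∑ j, if G.Adj i j then (k i j - κ) * k' i j / γ i j else 0

variable {f B C G P γ κ}

theorem lyapunov_nonneg (hP : P.PosSemidef) (hγ : ∀ i j, G.Adj i j → 0 < γ i j)
    (x : Fin N → Fin n → ℝ) (k : Fin N → Fin N → ℝ) : 0 ≤ lyapunov G P γ κ x k := by
  refine add_nonneg (Finset.sum_nonneg fun i _ => by
    simpa using hP.dotProduct_mulVec_nonneg (deviation x i)) ?_
  refine Finset.sum_nonneg fun i _ => Finset.sum_nonneg fun j _ => ?_
  split_ifs with h
  · have := hγ i j h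
    positivity
  · exact le_rfl

theorem hasDerivAt_lyapunov (hP : P.IsSymm) {x : Fin N → ℝ → Fin n → ℝ} {x' : Fin N → Fin n → ℝ}
    {k : Fin N → Fin N → ℝ → ℝ} {k' : Fin N → Fin N → ℝ} {t : ℝ}
    (hx : ∀ i, HasDerivAt (x i) (x' i) t) (hk : ∀ i j, G.Adj i j → HasDerivAt (k i j) (k' i j) t) :
    HasDerivAt (fun s => lyapunov G P γ κ (x · s) (k · · s))
      (lyapunovDeriv G P γ κ (x · t) x' (k · · t) k') t := by
  have hadapt : ∀ i j, HasDerivAt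
      (fun s => if G.Adj i j then (k i j s - κ) ^ 2 / (2 * γ i j) else 0)
      (if G.Adj i j then (k i j t - κ) * k' i j / γ i j else 0) t := fun i j => by
    by_cases h : G.Adj i j
    · simp only [h, if_true]
      exact ((((hk i j h).sub_const κ).pow 2).div_const (2 * γ i j)).congr_deriv (by
        norm_num
        ring)
    · simp only [h, if_false]
      exact hasDerivAt_const t 0
  exact ((HasDerivAt.fun_sum (u := Finset.univ) fun i _ =>
    (hasDerivAt_deviation hx i).dotProduct_mulVec_self hP).add
    (HasDerivAt.fun_sum fun i _ => HasDerivAt.fun_sum fun j _ => hadapt i j)).congr_deriv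
    (by rw [lyapunovDeriv, Finset.mul_sum])

theorem mulVec_deviation_sub_mulVec_deviation (x : Fin N → Fin n → ℝ) (i j : Fin N) :
    C *ᵥ deviation x i - C *ᵥ deviation x j = C *ᵥ x i - C *ᵥ x j := by
  simp only [deviation, mulVec_sub, sub_sub_sub_cancel_right]

theorem two_mul_sum_deviation_dotProduct_networkField_le [NeZero N] {X : Set (Fin n → ℝ)}
    (hX : Convex ℝ X) {J : (Fin n → ℝ) → Matrix (Fin n) (Fin n) ℝ}
    (hf : ∀ z ∈ X, HasFDerivAt f (J z).mulVecLin.toContinuousLinearMap z) (hP : P.IsSymm)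
    {θ : ℝ} (hLMI : ∀ z ∈ X, ∀ v, v ⬝ᵥ ((P * J z + (J z)ᵀ * P) *ᵥ v) ≤ θ * ((C *ᵥ v) ⬝ᵥ (C *ᵥ v)))
    (hPB : P * B = Cᵀ) {k : Fin N → Fin N → ℝ} (hk : ∀ i j, k i j = k j i)
    {x : Fin N → Fin n → ℝ} (hx : ∀ i, x i ∈ X) :
    2 * ∑ i, deviation x i ⬝ᵥ (P *ᵥ deviation (networkField f B C k x) i) ≤
      θ * ∑ i, (C *ᵥ deviation x i) ⬝ᵥ (C *ᵥ deviation x i) -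
        ∑ i, ∑ j, k i j * ((C *ᵥ deviation x i - C *ᵥ deviation x j) ⬝ᵥ
          (C *ᵥ deviation x i - C *ᵥ deviation x j)) := by
  set y := fun i => C *ᵥ deviation x i
  have hsplit : ∀ i, deviation (networkField f B C k x) i = (f (x i) - f (average x)) +
      B *ᵥ ∑ j, k i j • (y j - y i) + (f (average x) - average (networkField f B C k x)) := by
    intro i
    simp only [y, mulVec_deviation_sub_mulVec_deviation]
    simp only [deviation, networkField]
    abel
  have hB : ∀ i v, deviation x i ⬝ᵥ (P *ᵥ (B *ᵥ v)) = y i ⬝ᵥ v := fun i v => by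
    rw [mulVec_mulVec, hPB, dotProduct_mulVec, vecMul_transpose]
  have hsum : ∑ i, deviation x i ⬝ᵥ (P *ᵥ deviation (networkField f B C k x) i) =
      ∑ i, deviation x i ⬝ᵥ (P *ᵥ (f (x i) - f (average x))) +
        ∑ i, y i ⬝ᵥ ∑ j, k i j • (y j - y i) := by
    simp only [hsplit, mulVec_add, dotProduct_add, hB, Finset.sum_add_distrib, ← sum_dotProduct,
      sum_deviation, zero_dotProduct, add_zero]
  have hOFP : 2 * ∑ i, deviation x i ⬝ᵥ (P *ᵥ (f (x i) - f (average x))) ≤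
      θ * ∑ i, y i ⬝ᵥ y i := by
    rw [Finset.mul_sum, Finset.mul_sum]
    exact Finset.sum_le_sum fun i _ =>
      two_mul_dotProduct_mulVec_sub_le hX hf hP hLMI (average_mem hX hx) (hx i)
  rw [hsum, mul_add, two_mul_sum_dotProduct_sum_smul_sub hk]
  linarith

theorem sum_sum_ite_adaptationRate_eq (hγ : ∀ i j, G.Adj i j → γ i j ≠ 0) {k : Fin N → Fin N → ℝ}
    (hk : ∀ i j, ¬ G.Adj i j → k i j = 0) (x : Fin N → Fin n → ℝ) :
    ∑ i, ∑ j, (if G.Adj i j then (k i j - κ) * adaptationRate C γ x i j / γ i j else 0) =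
      ∑ i, ∑ j, k i j * ((C *ᵥ deviation x i - C *ᵥ deviation x j) ⬝ᵥ
          (C *ᵥ deviation x i - C *ᵥ deviation x j)) -
        κ * G.dirichletEnergy (fun i => C *ᵥ deviation x i) := by
  simp only [SimpleGraph.dirichletEnergy, Finset.mul_sum, ← Finset.sum_sub_distrib,
    mulVec_deviation_sub_mulVec_deviation, adaptationRate]
  refine Finset.sum_congr rfl fun i _ => Finset.sum_congr rfl fun j _ => ?_
  by_cases h : G.Adj i j
  · simp only [h, if_true]
    field_simp [hγ i j h]
  · simp [h, hk i j h]

theorem lyapunovDeriv_le [NeZero N] {X : Set (Fin n → ℝ)}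
    (hX : Convex ℝ X) {J : (Fin n → ℝ) → Matrix (Fin n) (Fin n) ℝ}
    (hf : ∀ z ∈ X, HasFDerivAt f (J z).mulVecLin.toContinuousLinearMap z) (hP : P.IsSymm)
    {θ : ℝ} (hLMI : ∀ z ∈ X, ∀ v, v ⬝ᵥ ((P * J z + (J z)ᵀ * P) *ᵥ v) ≤ θ * ((C *ᵥ v) ⬝ᵥ (C *ᵥ v)))
    (hPB : P * B = Cᵀ) {lam : ℝ}
    (hgap : ∀ y : Fin N → Fin p → ℝ, ∑ i, y i = 0 → lam * ∑ i, y i ⬝ᵥ y i ≤ G.dirichletEnergy y)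
    (hκ₀ : 0 ≤ κ) (hκ : θ + 1 ≤ κ * lam) (hγ : ∀ i j, G.Adj i j → γ i j ≠ 0)
    {k : Fin N → Fin N → ℝ} (hk : ∀ i j, k i j = k j i) (hk₀ : ∀ i j, ¬ G.Adj i j → k i j = 0)
    {x : Fin N → Fin n → ℝ} (hx : ∀ i, x i ∈ X) :
    lyapunovDeriv G P γ κ x (networkField f B C k x) k (adaptationRate C γ x) ≤
      -∑ i, (C *ᵥ deviation x i) ⬝ᵥ (C *ᵥ deviation x i) := by
  have hR : 0 ≤ ∑ i, (C *ᵥ deviation x i) ⬝ᵥ (C *ᵥ deviation x i) :=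
    Finset.sum_nonneg fun i _ => dotProduct_self_nonneg _
  have hQ := hgap (fun i => C *ᵥ deviation x i) (by
    simp only [← mulVec_sum, sum_deviation, mulVec_zero])
  rw [lyapunovDeriv, sum_sum_ite_adaptationRate_eq hγ hk₀]
  linarith [two_mul_sum_deviation_dotProduct_networkField_le hX hf hP hLMI hPB hk hx,
    mul_le_mul_of_nonneg_left hQ hκ₀, mul_le_mul_of_nonneg_right hκ hR]

theorem uniformContinuousOn_mulVec_deviation [Nonempty (Fin N)] (hf : Continuous f)
    {x : Fin N → ℝ → Fin n → ℝ} {k : Fin N → Fin N → ℝ → ℝ}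
    (hx : ∀ i t, 0 ≤ t → HasDerivAt (x i) (networkField f B C (k · · t) (x · t) i) t) {M : ℝ}
    (hM : ∀ t, 0 ≤ t → (∀ i, ‖x i t‖ ≤ M) ∧ ∀ i j, |k i j t| ≤ M) (i : Fin N) :
    UniformContinuousOn (fun t => C *ᵥ deviation (x · t) i) (Ici 0) := by
  refine uniformContinuousOn_Ici_of_hasDerivAt_comp (u := fun t => ((x · t), (k · · t)))
    (Ψ := fun u => C *ᵥ deviation (networkField f B C u.2 u.1) i) ?_ (M := M) ?_
    fun t ht => (hasDerivAt_deviation (fun j => hx j t ht) i).matrix_mulVec C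
  · unfold deviation average networkField
    fun_prop
  · intro t ht
    simpa only [norm_prod_le_iff, pi_norm_le_iff_of_nonempty, Real.norm_eq_abs] using hM t ht

end AdaptiveNetwork

end

open AdaptiveNetwork

theorem adaptive_ode_synchronization_general
    {n p N : ℕ}
    -- the undirected connected interconnection graph
    (G : SimpleGraph (Fin N)) (hG : G.Connected)
    -- the continuously differentiable vector field `f`, with Jacobian `J`
    (f : (Fin n → ℝ) → (Fin n → ℝ))
    (J : (Fin n → ℝ) → Matrix (Fin n) (Fin n) ℝ)
    (hf : ∀ z, HasFDerivAt f ((J z).mulVecLin.toContinuousLinearMap) z)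
    -- input and output matrices
    (B : Matrix (Fin n) (Fin p) ℝ) (C : Matrix (Fin p) (Fin n) ℝ)
    -- Assumption (OFP)
    (X : Set (Fin n → ℝ)) (hX : Convex ℝ X)
    (θ : ℝ) (hθ : 0 < θ)
    (P : Matrix (Fin n) (Fin n) ℝ) (hP : P.PosDef)
    (hLMI : ∀ z ∈ X, ∀ v : Fin n → ℝ,
      v ⬝ᵥ ((P * J z + (J z)ᵀ * P) *ᵥ v) ≤ θ * ((C *ᵥ v) ⬝ᵥ (C *ᵥ v)))
    (hPB : P * B = Cᵀ)
    -- a continuously differentiable solution of the adaptively coupled system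
    (x : Fin N → ℝ → (Fin n → ℝ)) (k : Fin N → Fin N → ℝ → ℝ)
    (γ : Fin N → Fin N → ℝ)
    (hγpos : ∀ i j, G.Adj i j → 0 < γ i j)
    (hksym : ∀ i j t, k i j t = k j i t)
    (hknonadj : ∀ i j, ¬ G.Adj i j → ∀ t, k i j t = 0)
    (hxode : ∀ i, ∀ t, 0 ≤ t →
      HasDerivAt (x i)
        (f (x i t) + B *ᵥ (∑ j, k i j t • (C *ᵥ x j t - C *ᵥ x i t))) t)
    (hkode : ∀ i j, G.Adj i j → ∀ t, 0 ≤ t →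
      HasDerivAt (k i j)
        (γ i j * ((C *ᵥ x i t - C *ᵥ x j t) ⬝ᵥ (C *ᵥ x i t - C *ᵥ x j t))) t)
    -- boundedness of the solutions on `[0,∞)`
    (hbdd : ∃ M : ℝ, ∀ t, 0 ≤ t → (∀ i, ‖x i t‖ ≤ M) ∧ (∀ i j, |k i j t| ≤ M))
    -- the states remain in `X`
    (hXinv : ∀ i, ∀ t, 0 ≤ t → x i t ∈ X) :
    -- conclusion: the outputs synchronize
    ∀ i, Tendsto (fun t => C *ᵥ (x i t - (N : ℝ)⁻¹ • ∑ j, x j t)) atTop (𝓝 0) := by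
  classical
  have : Nonempty (Fin N) := hG.nonempty
  have : NeZero N := ⟨(Fin.pos_iff_nonempty.2 hG.nonempty).ne'⟩
  have hPsymm : P.IsSymm := isHermitian_iff_isSymm.1 hP.isHermitian
  obtain ⟨lam, hlam, hgap⟩ := hG.exists_pos_mul_sum_dotProduct_self_le_dirichletEnergy (m := Fin p)
  obtain ⟨M, hM⟩ := hbdd
  set κ := (θ + 1) / lam
  have hκ₀ : 0 ≤ κ := by positivity
  intro i
  refine tendsto_zero_of_hasDerivAt_le_neg_norm_sq (c := 0)
    (fun t ht => hasDerivAt_lyapunov (κ := κ) hPsymm (fun j => hxode j t ht)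
      fun j l h => hkode j l h t ht)
    (fun t ht => ?_) (fun t _ => lyapunov_nonneg hP.posSemidef hγpos _ _)
    (uniformContinuousOn_mulVec_deviation
      (continuous_iff_continuousAt.2 fun z => (hf z).continuousAt) hxode hM i)
  refine (lyapunovDeriv_le hX (fun z _ => hf z) hPsymm hLMI hPB hgap hκ₀
    (div_mul_cancel₀ _ hlam.ne').ge (fun j l h => (hγpos j l h).ne') (fun j l => hksym j l t)
    (fun j l h => hknonadj j l h t) (fun j => hXinv j t ht)).trans (neg_le_neg ?_)
  exact norm_sq_le_sum_dotProduct_self (fun j => C *ᵥ deviation (x · t) j) i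

/-- Adaptive synchronization of diffusively coupled compartmental ODEs:
under Assumption (OFP), bounded solutions of the adaptively coupled system remaining in the
convex set `X` have synchronizing outputs: `ỹᵢ(t) = C (xᵢ(t) - x̄(t)) → 0` as `t → ∞`. -/
theorem adaptive_ode_synchronization
    {n p N : ℕ}
    -- the undirected connected interconnection graph
    (G : SimpleGraph (Fin N)) (hG : G.Connected)
    -- the continuously differentiable vector field `f`, with Jacobian `J`
    (f : (Fin n → ℝ) → (Fin n → ℝ))
    (J : (Fin n → ℝ) → Matrix (Fin n) (Fin n) ℝ)
    (hf : ∀ z, HasFDerivAt f ((J z).mulVecLin.toContinuousLinearMap) z)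
    (hJcont : Continuous J)
    -- input and output matrices
    (B : Matrix (Fin n) (Fin p) ℝ) (C : Matrix (Fin p) (Fin n) ℝ)
    -- Assumption (OFP)
    (X : Set (Fin n → ℝ)) (hX : Convex ℝ X)
    (θ : ℝ) (hθ : 0 < θ)
    (P : Matrix (Fin n) (Fin n) ℝ) (hP : P.PosDef)
    (hLMI : ∀ z ∈ X, ∀ v : Fin n → ℝ,
      v ⬝ᵥ ((P * J z + (J z)ᵀ * P) *ᵥ v) ≤ θ * ((C *ᵥ v) ⬝ᵥ (C *ᵥ v)))
    (hPB : P * B = Cᵀ)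
    -- a continuously differentiable solution of the adaptively coupled system
    (x : Fin N → ℝ → (Fin n → ℝ)) (k : Fin N → Fin N → ℝ → ℝ)
    (γ : Fin N → Fin N → ℝ)
    (hγsym : ∀ i j, γ i j = γ j i)
    (hγpos : ∀ i j, G.Adj i j → 0 < γ i j)
    (hksym : ∀ i j t, k i j t = k j i t)
    (hknonadj : ∀ i j, ¬ G.Adj i j → ∀ t, k i j t = 0)
    (hxode : ∀ i, ∀ t, 0 ≤ t →
      HasDerivAt (x i)
        (f (x i t) + B *ᵥ (∑ j, k i j t • (C *ᵥ x j t - C *ᵥ x i t))) t)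
    (hkode : ∀ i j, G.Adj i j → ∀ t, 0 ≤ t →
      HasDerivAt (k i j)
        (γ i j * ((C *ᵥ x i t - C *ᵥ x j t) ⬝ᵥ (C *ᵥ x i t - C *ᵥ x j t))) t)
    -- boundedness of the solutions on `[0,∞)`
    (hbdd : ∃ M : ℝ, ∀ t, 0 ≤ t → (∀ i, ‖x i t‖ ≤ M) ∧ (∀ i j, |k i j t| ≤ M))
    -- the states remain in `X`
    (hXinv : ∀ i, ∀ t, 0 ≤ t → x i t ∈ X) :
    -- conclusion: the outputs synchronize
    ∀ i, Tendsto (fun t => C *ᵥ (x i t - (N : ℝ)⁻¹ • ∑ j, x j t)) atTop (𝓝 0) :=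
  adaptive_ode_synchronization_general G hG f J hf B C X hX θ hθ P hP hLMI hPB x k γ hγpos hksym
    hknonadj hxode hkode hbdd hXinv
end

section
/- Let G^{(1)},…,G^{(m)} be undirected connected graphs on nodes 1,…,N, let f : ℝⁿ → ℝⁿ be continuously differentiable, and for q = 1,…,m let B^{(q)} ∈ ℝ^{n×p_q} and C^{(q)} ∈ ℝ^{p_q×n}. Suppose there exist a convex set X ⊆ ℝⁿ, θ > 0, a symmetric positive definite P ∈ ℝ^{n×n}, and constants ω^{(q)} > 0 such that P·J(x) + J(x)ᵀ·P ⪯ θ·CᵀC for all x ∈ X with C^T = [C^{(1)T} ⋯ C^{(m)T}], and P·B^{(q)} = ω^{(q)}·C^{(q)T} for each q. Let xᵢ : [0,∞) → ℝⁿ and k^{(q)}ᵢⱼ : [0,∞) → ℝ be continuously differentiable functions solving the multi-channel adaptively coupled system. If all xᵢ(t) and k^{(q)}ᵢⱼ(t) are bounded on [0,∞) and xᵢ(t) ∈ X for all t ≥ 0 and all i, then for each q and each i, ỹᵢ^{(q)}(t) := C^{(q)}(xᵢ(t) − x̄(t)) → 0 as t → ∞, where x̄(t) = (1/N)∑_{i=1}^N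 xᵢ(t). -/
/-!
Along an edge of `G⁽q⁾` the gain `k⁽q⁾ᵢⱼ` is nondecreasing, with derivative `γ |yᵢ - yⱼ|²`, and
bounded, so `|yᵢ - yⱼ|²` has a finite integral. The states have bounded velocities, so this
integrand is Lipschitz, and Barbalat's lemma forces `yᵢ - yⱼ → 0`. Connectivity of `G⁽q⁾` carries
this from edges to all pairs, and `ỹᵢ` is the average of the differences `yᵢ - yⱼ`.
-/

open Matrix Filter Topology Set
open scoped NNReal

theorem MonotoneOn.tendsto_apply_add_sub_apply_of_bddAbove {k : ℝ → ℝ} (hk : MonotoneOn k (Ici 0))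
    (hbdd : BddAbove (k '' Ici 0)) (δ : ℝ) :
    Tendsto (fun t => k (t + δ) - k t) atTop (𝓝 0) := by
  have hmono : Monotone fun t => k (max t 0) := fun s t hst =>
    hk (le_max_right s 0) (le_max_right t 0) (max_le_max_right 0 hst)
  have hrange : BddAbove (range fun t => k (max t 0)) :=
    hbdd.mono (range_subset_iff.2 fun t => mem_image_of_mem k (le_max_right t 0))
  have hlim := tendsto_atTop_ciSup hmono hrange
  have hshift := hlim.comp (tendsto_atTop_add_const_right atTop δ tendsto_id)
  rw [← sub_self (⨆ t, k (max t 0))]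
  refine (hshift.sub hlim).congr' ?_
  filter_upwards [eventually_ge_atTop 0, eventually_ge_atTop (-δ)] with t ht htδ
  simp [max_eq_left ht, max_eq_left (show 0 ≤ t + δ by linarith)]

theorem mul_sub_le_sub_of_hasDerivAt_of_lipschitzOnWith {k g : ℝ → ℝ} {K : ℝ≥0}
    (hk : ∀ t, 0 ≤ t → HasDerivAt k (g t) t) (hlip : LipschitzOnWith K g (Ici 0))
    {t δ : ℝ} (ht : 0 ≤ t) (hδ : 0 ≤ δ) :
    δ * (g t - K * δ) ≤ k (t + δ) - k t := by
  have hIcc : ∀ s ∈ Icc t (t + δ), 0 ≤ s := fun s hs => ht.trans hs.1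
  have hlow : ∀ s ∈ Icc t (t + δ), g t - K * δ ≤ g s := by
    intro s hs
    have hdist : |g t - g s| ≤ K * |t - s| := by
      simpa [Real.dist_eq] using hlip.dist_le_mul t (mem_Ici.2 ht) s (mem_Ici.2 (hIcc s hs))
    have hts : |t - s| ≤ δ := by rw [abs_sub_comm, abs_of_nonneg] <;> linarith [hs.1, hs.2]
    nlinarith [le_abs_self (g t - g s), K.coe_nonneg]
  have hincr := (convex_Icc t (t + δ)).mul_sub_le_image_sub_of_le_deriv
    (fun s hs => (hk s (hIcc s hs)).continuousAt.continuousWithinAt)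
    (fun s hs => (hk s (hIcc s (interior_subset hs))).differentiableAt.differentiableWithinAt)
    (fun s hs => (hk s (hIcc s (interior_subset hs))).deriv ▸ hlow s (interior_subset hs))
    t (left_mem_Icc.2 (by linarith)) (t + δ) (right_mem_Icc.2 (by linarith)) (by linarith)
  simpa [mul_comm] using hincr

theorem tendsto_zero_of_hasDerivAt_of_bddAbove {k g : ℝ → ℝ} {K : ℝ≥0} {M : ℝ}
    (hk : ∀ t, 0 ≤ t → HasDerivAt k (g t) t) (hg : ∀ t, 0 ≤ t → 0 ≤ g t)
    (hlip : LipschitzOnWith K g (Ici 0)) (hkM : ∀ t, 0 ≤ t → k t ≤ M) :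
    Tendsto g atTop (𝓝 0) := by
  have hmono : MonotoneOn k (Ici 0) :=
    monotoneOn_of_hasDerivWithinAt_nonneg (convex_Ici 0)
      (fun t ht => (hk t ht).continuousAt.continuousWithinAt)
      (fun t ht => (hk t (interior_subset ht)).hasDerivWithinAt)
      (fun t ht => hg t (interior_subset ht))
  have hbdd : BddAbove (k '' Ici 0) := ⟨M, forall_mem_image.2 hkM⟩
  refine tendsto_order.2 ⟨fun a ha => ?_, fun ε hε => ?_⟩
  · filter_upwards [eventually_ge_atTop 0] with t ht using ha.trans_le (hg t ht)
  -- `g t ≤ (k (t + δ) - k t) / δ + K δ`, and the increment of the convergent `k` tends to `0`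
  set δ := ε / (2 * (K + 1)) with hδ
  have hδpos : 0 < δ := by positivity
  have hKδ : K * δ ≤ ε / 2 := by
    rw [hδ, mul_div_assoc', div_le_div_iff₀ (by positivity) (by norm_num)]
    nlinarith [K.coe_nonneg]
  filter_upwards [eventually_ge_atTop 0,
    (hmono.tendsto_apply_add_sub_apply_of_bddAbove hbdd δ).eventually
      (gt_mem_nhds (show (0 : ℝ) < δ * (ε / 2) by positivity))] with t ht hsmall
  nlinarith [mul_sub_le_sub_of_hasDerivAt_of_lipschitzOnWith hk hlip ht hδpos.le]

section InnerProductSpace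

variable {F : Type*} [NormedAddCommGroup F] [InnerProductSpace ℝ F]

theorem lipschitzOnWith_norm_sq_of_hasDerivAt {y y' : ℝ → F} {s : Set ℝ} (hs : Convex ℝ s)
    (hy : ∀ t ∈ s, HasDerivAt y (y' t) t) {R L : ℝ≥0} (hR : ∀ t ∈ s, ‖y t‖ ≤ R)
    (hL : ∀ t ∈ s, ‖y' t‖ ≤ L) :
    LipschitzOnWith (2 * R * L) (fun t => ‖y t‖ ^ 2) s := by
  refine hs.lipschitzOnWith_of_nnnorm_hasDerivWithin_le
    (fun t ht => (hy t ht).norm_sq.hasDerivWithinAt) fun t ht => ?_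
  rw [← NNReal.coe_le_coe, coe_nnnorm, Real.norm_eq_abs, abs_mul, abs_two]
  push_cast
  rw [mul_assoc]
  exact mul_le_mul_of_nonneg_left ((abs_real_inner_le_norm _ _).trans
    (mul_le_mul (hR t ht) (hL t ht) (norm_nonneg _) R.coe_nonneg)) zero_le_two

theorem tendsto_zero_of_hasDerivAt_norm_sq_of_bddAbove {y y' : ℝ → F} {κ : ℝ → ℝ}
    {γ M R L : ℝ} (hγ : 0 < γ) (hy : ∀ t, 0 ≤ t → HasDerivAt y (y' t) t)
    (hR : ∀ t, 0 ≤ t → ‖y t‖ ≤ R) (hL : ∀ t, 0 ≤ t → ‖y' t‖ ≤ L)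
    (hκ : ∀ t, 0 ≤ t → HasDerivAt κ (γ * ‖y t‖ ^ 2) t) (hκM : ∀ t, 0 ≤ t → κ t ≤ M) :
    Tendsto y atTop (𝓝 0) := by
  have hsq : Tendsto (fun t => ‖y t‖ ^ 2) atTop (𝓝 0) := by
    refine tendsto_zero_of_hasDerivAt_of_bddAbove (k := fun t => γ⁻¹ * κ t) (M := γ⁻¹ * M)
      (fun t ht => ?_) (fun t _ => by positivity)
      (lipschitzOnWith_norm_sq_of_hasDerivAt (convex_Ici 0) hy
        (fun t ht => (hR t ht).trans R.le_coe_toNNReal) fun t ht => (hL t ht).trans L.le_coe_toNNReal)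
      (fun t ht => mul_le_mul_of_nonneg_left (hκM t ht) (inv_nonneg.2 hγ.le))
    simpa [inv_mul_cancel_left₀ hγ.ne'] using (hκ t ht).const_mul γ⁻¹
  rw [tendsto_zero_iff_norm_tendsto_zero]
  simpa using hsq.sqrt

end InnerProductSpace

theorem SimpleGraph.Reachable.tendsto_sub_of_forall_adj {V α E : Type*} [AddCommGroup E]
    [TopologicalSpace E] [ContinuousAdd E] {G : SimpleGraph V} {u : V → α → E}
    {l : Filter α} (h : ∀ a b, G.Adj a b → Tendsto (fun t => u a t - u b t) l (𝓝 0))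
    {a b : V} (hab : G.Reachable a b) : Tendsto (fun t => u a t - u b t) l (𝓝 0) := by
  obtain ⟨w⟩ := hab
  induction w with
  | nil => simpa using tendsto_const_nhds
  | cons hadj _ ih => simpa using (h _ _ hadj).add ih

theorem tendsto_sub_inv_card_smul_sum {ι α E : Type*} [Fintype ι] [AddCommGroup E] [Module ℝ E]
    [TopologicalSpace E] [ContinuousAdd E] [ContinuousConstSMul ℝ E]
    {u : ι → α → E} {l : Filter α} {i : ι} (h : ∀ j, Tendsto (fun t => u i t - u j t) l (𝓝 0)) :
    Tendsto (fun t => u i t - (Fintype.card ι : ℝ)⁻¹ • ∑ j, u j t) l (𝓝 0) := by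
  have hcard : (Fintype.card ι : ℝ) ≠ 0 := Nat.cast_ne_zero.2 (Fintype.card_pos_iff.2 ⟨i⟩).ne'
  have hmean : ∀ t, u i t - (Fintype.card ι : ℝ)⁻¹ • ∑ j, u j t
      = (Fintype.card ι : ℝ)⁻¹ • ∑ j, (u i t - u j t) := by
    intro t
    rw [Finset.sum_sub_distrib, Finset.sum_const, Finset.card_univ, smul_sub,
      ← Nat.cast_smul_eq_nsmul ℝ, inv_smul_smul₀ hcard]
  have hlim := (tendsto_finsetSum Finset.univ fun j _ => h j).const_smul (Fintype.card ι : ℝ)⁻¹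
  rw [Finset.sum_const_zero, smul_zero] at hlim
  exact hlim.congr fun t => (hmean t).symm

section CoupledSystem

variable {n N m : ℕ} {p : Fin m → ℕ}

def coupledVectorField (f : (Fin n → ℝ) → (Fin n → ℝ))
    (B : ∀ q : Fin m, Matrix (Fin n) (Fin (p q)) ℝ) (C : ∀ q : Fin m, Matrix (Fin (p q)) (Fin n) ℝ)
    (X : Fin N → Fin n → ℝ) (K : Fin m → Fin N → Fin N → ℝ) (i : Fin N) : Fin n → ℝ :=
  f (X i) + ∑ q, B q *ᵥ ∑ j, K q i j • (C q *ᵥ X j - C q *ᵥ X i)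

theorem exists_norm_coupledVectorField_le {f : (Fin n → ℝ) → (Fin n → ℝ)} (hf : Continuous f)
    (B : ∀ q : Fin m, Matrix (Fin n) (Fin (p q)) ℝ) (C : ∀ q : Fin m, Matrix (Fin (p q)) (Fin n) ℝ)
    (M : ℝ) : ∃ V, ∀ (X : Fin N → Fin n → ℝ) (K : Fin m → Fin N → Fin N → ℝ),
      (∀ i, ‖X i‖ ≤ M) → (∀ q i j, |K q i j| ≤ M) → ∀ i, ‖coupledVectorField f B C X K i‖ ≤ V := by
  have hcont : Continuous fun Z : (Fin N → Fin n → ℝ) × (Fin m → Fin N → Fin N → ℝ) =>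
      coupledVectorField f B C Z.1 Z.2 := by
    unfold coupledVectorField
    fun_prop
  obtain ⟨V, hV⟩ := (isCompact_closedBall 0 (max M 0)).exists_bound_of_continuousOn
    hcont.continuousOn
  refine ⟨V, fun X K hX hK i => (norm_le_pi_norm _ i).trans (hV (X, K) ?_)⟩
  rw [mem_closedBall_zero_iff, Prod.norm_def, max_le_iff]
  have hM := le_max_right M 0
  refine ⟨pi_norm_le_iff_of_nonneg hM |>.2 fun i => (hX i).trans (le_max_left M 0),
    pi_norm_le_iff_of_nonneg hM |>.2 fun q => pi_norm_le_iff_of_nonneg hM |>.2 fun i =>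
      pi_norm_le_iff_of_nonneg hM |>.2 fun j => ?_⟩
  rw [Real.norm_eq_abs]
  exact (hK q i j).trans (le_max_left M 0)

theorem tendsto_mulVec_sub_of_adaptive_gain {f : (Fin n → ℝ) → (Fin n → ℝ)} (hf : Continuous f)
    {B : ∀ q : Fin m, Matrix (Fin n) (Fin (p q)) ℝ} {C : ∀ q : Fin m, Matrix (Fin (p q)) (Fin n) ℝ}
    {x : Fin N → ℝ → (Fin n → ℝ)} {k : Fin m → Fin N → Fin N → ℝ → ℝ} {M : ℝ}
    (hx : ∀ i t, 0 ≤ t →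
      HasDerivAt (x i) (coupledVectorField f B C (fun j => x j t) (fun q i j => k q i j t) i) t)
    (hbdd : ∀ t, 0 ≤ t → (∀ i, ‖x i t‖ ≤ M) ∧ (∀ q i j, |k q i j t| ≤ M))
    {q : Fin m} {a b : Fin N} {γ : ℝ} (hγ : 0 < γ)
    (hk : ∀ t, 0 ≤ t → HasDerivAt (k q a b)
      (γ * ((C q *ᵥ x a t - C q *ᵥ x b t) ⬝ᵥ (C q *ᵥ x a t - C q *ᵥ x b t))) t) :
    Tendsto (fun t => C q *ᵥ x a t - C q *ᵥ x b t) atTop (𝓝 0) := by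
  obtain ⟨V, hV⟩ := exists_norm_coupledVectorField_le hf B C M
  set v := fun i t => coupledVectorField f B C (fun j => x j t) (fun q i j => k q i j t) i
  have hvV : ∀ i t, 0 ≤ t → ‖v i t‖ ≤ V := fun i t ht => hV _ _ (hbdd t ht).1 (hbdd t ht).2 i
  -- `Fin p → ℝ` carries the sup norm; the adaptive law sees the Euclidean one
  set Cq : (Fin n → ℝ) →L[ℝ] EuclideanSpace ℝ (Fin (p q)) :=
    (EuclideanSpace.equiv (Fin (p q)) ℝ).symm.toContinuousLinearMap ∘L
      (C q).mulVecLin.toContinuousLinearMap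
  have hCq : ∀ w, ‖Cq w‖ ^ 2 = (C q *ᵥ w) ⬝ᵥ (C q *ᵥ w) := fun w => by
    rw [← real_inner_self_eq_norm_sq]
    exact EuclideanSpace.inner_toLp_toLp _ _
  have hy := tendsto_zero_of_hasDerivAt_norm_sq_of_bddAbove (y := fun t => Cq (x a t - x b t))
    (R := ‖Cq‖ * (M + M)) (L := ‖Cq‖ * (V + V)) (M := M) hγ
    (fun t ht => Cq.hasFDerivAt.comp_hasDerivAt t ((hx a t ht).sub (hx b t ht)))
    (fun t ht => (Cq.le_opNorm _).trans (mul_le_mul_of_nonneg_left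
      (norm_sub_le_of_le ((hbdd t ht).1 a) ((hbdd t ht).1 b)) (norm_nonneg _)))
    (fun t ht => (Cq.le_opNorm _).trans (mul_le_mul_of_nonneg_left
      (norm_sub_le_of_le (hvV a t ht) (hvV b t ht)) (norm_nonneg _)))
    (fun t ht => by rw [hCq, mulVec_sub]; exact hk t ht)
    (fun t ht => (le_abs_self _).trans ((hbdd t ht).2 q a b))
  have hlim := ((EuclideanSpace.equiv (Fin (p q)) ℝ).continuous.tendsto 0).comp hy
  rw [map_zero] at hlim
  exact hlim.congr fun t => mulVec_sub _ _ _

end CoupledSystem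

theorem adaptive_ode_synchronization_multichannel_general
    {n N m : ℕ} {p : Fin m → ℕ}
    -- the undirected connected interconnection graphs, one per channel
    (G : Fin m → SimpleGraph (Fin N)) (hG : ∀ q, (G q).Connected)
    -- the continuously differentiable vector field `f`, with Jacobian `J`
    (f : (Fin n → ℝ) → (Fin n → ℝ))
    (J : (Fin n → ℝ) → Matrix (Fin n) (Fin n) ℝ)
    (hf : ∀ z, HasFDerivAt f ((J z).mulVecLin.toContinuousLinearMap) z)
    -- input and output matrices for each channel
    (B : ∀ q : Fin m, Matrix (Fin n) (Fin (p q)) ℝ)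
    (C : ∀ q : Fin m, Matrix (Fin (p q)) (Fin n) ℝ)
    -- a continuously differentiable solution of the multi-channel adaptively coupled system
    (x : Fin N → ℝ → (Fin n → ℝ)) (k : Fin m → Fin N → Fin N → ℝ → ℝ)
    (γ : Fin m → Fin N → Fin N → ℝ)
    (hγpos : ∀ q i j, (G q).Adj i j → 0 < γ q i j)
    (hxode : ∀ i, ∀ t, 0 ≤ t →
      HasDerivAt (x i)
        (f (x i t) + ∑ q, B q *ᵥ (∑ j, k q i j t • (C q *ᵥ x j t - C q *ᵥ x i t))) t)
    (hkode : ∀ q i j, (G q).Adj i j → ∀ t, 0 ≤ t →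
      HasDerivAt (k q i j)
        (γ q i j * ((C q *ᵥ x i t - C q *ᵥ x j t) ⬝ᵥ (C q *ᵥ x i t - C q *ᵥ x j t))) t)
    -- boundedness of the solutions on `[0,∞)`
    (hbdd : ∃ M : ℝ, ∀ t, 0 ≤ t → (∀ i, ‖x i t‖ ≤ M) ∧ (∀ q i j, |k q i j t| ≤ M)) :
    -- conclusion: each channel's outputs synchronize
    ∀ q i, Tendsto (fun t => C q *ᵥ (x i t - (N : ℝ)⁻¹ • ∑ j, x j t)) atTop (𝓝 0) := by
  obtain ⟨M, hM⟩ := hbdd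
  have hfc : Continuous f := continuous_iff_continuousAt.2 fun z => (hf z).continuousAt
  intro q i
  have hpair : ∀ j, Tendsto (fun t => C q *ᵥ x i t - C q *ᵥ x j t) atTop (𝓝 0) := fun j =>
    ((hG q).preconnected i j).tendsto_sub_of_forall_adj fun a b hab =>
      tendsto_mulVec_sub_of_adaptive_gain hfc hxode hM (hγpos q a b hab) (hkode q a b hab)
  simpa [mulVec_sub, mulVec_smul, mulVec_sum] using
    tendsto_sub_inv_card_smul_sum (u := fun j t => C q *ᵥ x j t) hpair

/-- Multi-channel adaptive synchronization: with `m` input-output channels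
`(B⁽q⁾, C⁽q⁾)` coupled over possibly different connected graphs `G⁽q⁾`, under the relaxed
Assumption (OFP) with multipliers `ω⁽q⁾ > 0`, bounded solutions of the multi-channel
adaptively coupled system remaining in `X` satisfy `ỹᵢ⁽q⁾(t) = C⁽q⁾ (xᵢ(t) - x̄(t)) → 0`. -/
theorem adaptive_ode_synchronization_multichannel
    {n N m : ℕ} {p : Fin m → ℕ}
    -- the undirected connected interconnection graphs, one per channel
    (G : Fin m → SimpleGraph (Fin N)) (hG : ∀ q, (G q).Connected)
    -- the continuously differentiable vector field `f`, with Jacobian `J`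
    (f : (Fin n → ℝ) → (Fin n → ℝ))
    (J : (Fin n → ℝ) → Matrix (Fin n) (Fin n) ℝ)
    (hf : ∀ z, HasFDerivAt f ((J z).mulVecLin.toContinuousLinearMap) z)
    (hJcont : Continuous J)
    -- input and output matrices for each channel
    (B : ∀ q : Fin m, Matrix (Fin n) (Fin (p q)) ℝ)
    (C : ∀ q : Fin m, Matrix (Fin (p q)) (Fin n) ℝ)
    -- Assumption (OFP), relaxed with multipliers ω⁽q⁾ > 0; note that for the stacked
    -- matrix C we have vᵀCᵀCv = ∑_q |C⁽q⁾ v|²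
    (X : Set (Fin n → ℝ)) (hX : Convex ℝ X)
    (θ : ℝ) (hθ : 0 < θ)
    (P : Matrix (Fin n) (Fin n) ℝ) (hP : P.PosDef)
    (ω : Fin m → ℝ) (hω : ∀ q, 0 < ω q)
    (hLMI : ∀ z ∈ X, ∀ v : Fin n → ℝ,
      v ⬝ᵥ ((P * J z + (J z)ᵀ * P) *ᵥ v) ≤ θ * ∑ q, ((C q *ᵥ v) ⬝ᵥ (C q *ᵥ v)))
    (hPB : ∀ q, P * B q = ω q • (C q)ᵀ)
    -- a continuously differentiable solution of the multi-channel adaptively coupled system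
    (x : Fin N → ℝ → (Fin n → ℝ)) (k : Fin m → Fin N → Fin N → ℝ → ℝ)
    (γ : Fin m → Fin N → Fin N → ℝ)
    (hγsym : ∀ q i j, γ q i j = γ q j i)
    (hγpos : ∀ q i j, (G q).Adj i j → 0 < γ q i j)
    (hksym : ∀ q i j t, k q i j t = k q j i t)
    (hknonadj : ∀ q i j, ¬ (G q).Adj i j → ∀ t, k q i j t = 0)
    (hxode : ∀ i, ∀ t, 0 ≤ t →
      HasDerivAt (x i)
        (f (x i t) + ∑ q, B q *ᵥ (∑ j, k q i j t • (C q *ᵥ x j t - C q *ᵥ x i t))) t)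
    (hkode : ∀ q i j, (G q).Adj i j → ∀ t, 0 ≤ t →
      HasDerivAt (k q i j)
        (γ q i j * ((C q *ᵥ x i t - C q *ᵥ x j t) ⬝ᵥ (C q *ᵥ x i t - C q *ᵥ x j t))) t)
    -- boundedness of the solutions on `[0,∞)`
    (hbdd : ∃ M : ℝ, ∀ t, 0 ≤ t → (∀ i, ‖x i t‖ ≤ M) ∧ (∀ q i j, |k q i j t| ≤ M))
    -- the states remain in `X`
    (hXinv : ∀ i, ∀ t, 0 ≤ t → x i t ∈ X) :
    -- conclusion: each channel's outputs synchronize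
    ∀ q i, Tendsto (fun t => C q *ᵥ (x i t - (N : ℝ)⁻¹ • ∑ j, x j t)) atTop (𝓝 0) :=
  adaptive_ode_synchronization_multichannel_general G hG f J hf B C x k γ hγpos hxode hkode hbdd
end

section
/- Let f : ℝ → ℝ be given by f(x) = x − x³, let N ≥ 1, and let x̃₁,…,x̃_N : [0,∞) → ℝ be continuous functions with M := sup_{t ≥ 0} max_i |x̃ᵢ(t)| < ∞. If x̄ : [0,∞) → ℝ is differentiable and satisfies d/dt x̄(t) = (1/N)·∑_{i=1}^N f(x̄(t) + x̃ᵢ(t)) for all t ≥ 0, then |x̄(t)| ≤ max{ |x̄(0)|, 1 + M } for all t ≥ 0. -/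
/-!
Once `|x̄| > 1 + M`, every summand `x̄ · f(x̄ + x̃ᵢ)` is negative, so `x̄²` cannot increase
while `|x̄|` exceeds `1 + M`; a barrier argument then keeps `|x̄|` below `max |x̄(0)| (1 + M)`.
-/

theorem mul_bistable_neg_of_one_add_abs_lt {a d : ℝ} (h : 1 + |d| < |a|) :
    a * ((a + d) - (a + d) ^ 3) < 0 := by
  have hshift : 1 < |a + d| := by linarith [abs_sub_abs_le_abs_add a d]
  have hsq : 1 < (a + d) ^ 2 := by nlinarith [sq_abs (a + d)]
  have hsame : 0 < a * (a + d) := by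
    have had : -(|a| * |d|) ≤ a * d := by rw [← abs_mul]; exact neg_abs_le _
    nlinarith [sq_abs a, abs_nonneg d]
  calc a * ((a + d) - (a + d) ^ 3) = a * (a + d) * (1 - (a + d) ^ 2) := by ring
    _ < 0 := mul_neg_of_pos_of_neg hsame (by linarith)

theorem mul_sum_bistable_nonpos {ι : Type*} (s : Finset ι) (d : ι → ℝ) {a M : ℝ}
    (hd : ∀ i ∈ s, |d i| ≤ M) (ha : 1 + M < |a|) :
    a * ∑ i ∈ s, ((a + d i) - (a + d i) ^ 3) ≤ 0 := by
  rw [Finset.mul_sum]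
  exact Finset.sum_nonpos fun i hi =>
    (mul_bistable_neg_of_one_add_abs_lt (by linarith [hd i hi])).le

/-- Fencing with the barriers `max (u t₀) C + ε * (t - t₀ + 1)`, which `u` can only touch
where it exceeds `C`, hence where its derivative is below the barrier's slope `ε`. -/
theorem le_max_of_deriv_nonpos_above {u u' : ℝ → ℝ} {t₀ C : ℝ}
    (hu : ∀ t, t₀ ≤ t → HasDerivAt u (u' t) t) (hu' : ∀ t, t₀ ≤ t → C < u t → u' t ≤ 0) :
    ∀ t, t₀ ≤ t → u t ≤ max (u t₀) C := by
  intro t ht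
  set K := max (u t₀) C
  have hbarrier : ∀ ε > 0, u t ≤ K + ε * (t - t₀ + 1) := by
    intro ε hε
    refine image_le_of_deriv_right_lt_deriv_boundary (B := fun s => K + ε * (s - t₀ + 1))
      (fun s hs => (hu s hs.1).continuousAt.continuousWithinAt)
      (fun s hs => (hu s hs.1).hasDerivWithinAt) ?_
      (fun s => (((hasDerivAt_id s).sub_const t₀).add_const 1).const_mul ε |>.const_add K) ?_
      ⟨ht, le_rfl⟩
    · linarith [le_max_left (u t₀) C]
    · intro s hs hus
      have hCu : C < u s := by
        rw [hus]
        nlinarith [le_max_right (u t₀) C, hs.1]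
      simpa using (hu' s hs.1 hCu).trans_lt hε
  refine le_of_forall_pos_le_add fun δ hδ => ?_
  have hlen : 0 < t - t₀ + 1 := by linarith
  simpa [div_mul_cancel₀ δ hlen.ne'] using hbarrier (δ / (t - t₀ + 1)) (by positivity)

theorem abs_le_max_of_mul_deriv_nonpos_above {x x' : ℝ → ℝ} {t₀ C : ℝ}
    (hx : ∀ t, t₀ ≤ t → HasDerivAt x (x' t) t)
    (hx' : ∀ t, t₀ ≤ t → C < |x t| → x t * x' t ≤ 0) :
    ∀ t, t₀ ≤ t → |x t| ≤ max |x t₀| C := by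
  intro t ht
  set B := max |x t₀| C
  have hB : 0 ≤ B := (abs_nonneg _).trans (le_max_left _ _)
  have hsq_deriv : ∀ s, t₀ ≤ s → HasDerivAt (fun s => x s ^ 2) (2 * (x s * x' s)) s := by
    intro s hs
    simpa [mul_assoc] using (hx s hs).fun_pow 2
  have hsq : x t ^ 2 ≤ max (x t₀ ^ 2) (B ^ 2) := by
    refine le_max_of_deriv_nonpos_above hsq_deriv (fun s hs hBs => ?_) t ht
    have hBx : B < |x s| := by simpa [abs_of_nonneg hB] using sq_lt_sq.1 hBs
    linarith [hx' s hs ((le_max_right _ _).trans_lt hBx)]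
  have hx₀ : x t₀ ^ 2 ≤ B ^ 2 := sq_le_sq.2 (by simp [B, abs_of_nonneg hB])
  simpa [abs_of_nonneg hB] using sq_le_sq.1 (hsq.trans (max_le hx₀ le_rfl))

theorem bistable_average_BIBS_general
    {N : ℕ}
    (xt : Fin N → ℝ → ℝ)
    (M : ℝ) (hM : ∀ t : ℝ, 0 ≤ t → ∀ i, |xt i t| ≤ M)
    (xbar : ℝ → ℝ)
    (hode : ∀ t : ℝ, 0 ≤ t →
      HasDerivAt xbar
        ((N : ℝ)⁻¹ * ∑ i, ((xbar t + xt i t) - (xbar t + xt i t) ^ 3)) t) :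
    ∀ t : ℝ, 0 ≤ t → |xbar t| ≤ max |xbar 0| (1 + M) := by
  refine abs_le_max_of_mul_deriv_nonpos_above hode fun t ht hxt => ?_
  rw [mul_left_comm]
  exact mul_nonpos_of_nonneg_of_nonpos (by positivity)
    (mul_sum_bistable_nonpos _ _ (fun i _ => hM t ht i) hxt)

/-- Bounded-input-bounded-state property of the average dynamics for the
bistable node dynamics `f(x) = x - x³`: if the deviations `x̃ᵢ` are continuous and uniformly
bounded by `M` on `[0,∞)` and `x̄` solves `x̄' = (1/N) ∑ᵢ f(x̄ + x̃ᵢ)`, then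
`|x̄(t)| ≤ max {|x̄(0)|, 1 + M}` for all `t ≥ 0`. -/
theorem bistable_average_BIBS
    {N : ℕ} (hN : 1 ≤ N)
    (xt : Fin N → ℝ → ℝ) (hxtcont : ∀ i, Continuous (xt i))
    (M : ℝ) (hM : ∀ t : ℝ, 0 ≤ t → ∀ i, |xt i t| ≤ M)
    (xbar : ℝ → ℝ)
    (hode : ∀ t : ℝ, 0 ≤ t →
      HasDerivAt xbar
        ((N : ℝ)⁻¹ * ∑ i, ((xbar t + xt i t) - (xbar t + xt i t) ^ 3)) t) :
    ∀ t : ℝ, 0 ≤ t → |xbar t| ≤ max |xbar 0| (1 + M) :=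
  bistable_average_BIBS_general xt M hM xbar hode
end
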